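/- Assume the spectral setup and set p_r := Re(tr(ρ_0 P_r)). Then for every t ≥ 0, x ∈ ℝ and indices n ≠ m, the off-diagonal block of the normalized state satisfies P_n ρ_t(x) P_m = exp(−i ℏ⁻¹ (E_n − E_m) t) · Φ_{nm}(t, x) · (P_n ρ_0 P_m), where Φ_{nm}(t, x) := exp((σ/2)(E_n + E_m) x − (σ²/4)(E_n² + E_m²) t) / Σ_{r=1}^D p_r exp(σ E_r x − (σ²/2) E_r² t). -/

import Mathlib

open Matrix
open scoped ComplexOrder

section Aux
variable {N D : ℕ} {P : Fin D → Matrix (Fin N) (Fin N) ℂ}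

lemma projSum_mul (hPorth : ∀ r s, r ≠ s → P r * P s = 0)
    (hPidem : ∀ r, P r * P r = P r) (a b : Fin D → ℂ) :
    (∑ r, a r • P r) * (∑ r, b r • P r) = ∑ r, (a r * b r) • P r := by
  rw [Finset.sum_mul]
  refine Finset.sum_congr rfl fun r _ => ?_
  rw [Finset.mul_sum, Finset.sum_eq_single r]
  · rw [smul_mul_assoc, mul_smul_comm, hPidem r, smul_smul]
  · intro s _ hs
    rw [smul_mul_assoc, mul_smul_comm, hPorth r s (Ne.symm hs)]
    simp
  · intro h; exact absurd (Finset.mem_univ r) h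

lemma projSum_pow (hPorth : ∀ r s, r ≠ s → P r * P s = 0)
    (hPidem : ∀ r, P r * P r = P r) (hPsum : ∑ r, P r = 1)
    (a : Fin D → ℂ) (n : ℕ) :
    (∑ r, a r • P r) ^ n = ∑ r, (a r ^ n) • P r := by
  induction n with
  | zero => simp [hPsum]
  | succ n ih =>
      rw [pow_succ, ih, projSum_mul hPorth hPidem]
      exact Finset.sum_congr rfl fun r _ => by rw [pow_succ]

lemma projSum_exp (hPorth : ∀ r s, r ≠ s → P r * P s = 0)
    (hPidem : ∀ r, P r * P r = P r) (hPsum : ∑ r, P r = 1)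
    (a : Fin D → ℂ) :
    NormedSpace.exp (∑ r, a r • P r) = ∑ r, Complex.exp (a r) • P r := by
  rw [NormedSpace.exp_eq_tsum (𝕂 := ℂ)]
  have h1 : ∀ n : ℕ, ((n.factorial : ℂ))⁻¹ • (∑ r, a r • P r) ^ n
      = ∑ r, (((n.factorial : ℂ))⁻¹ • a r ^ n) • P r := by
    intro n
    rw [projSum_pow hPorth hPidem hPsum, Finset.smul_sum]
    exact Finset.sum_congr rfl fun r _ => by rw [smul_smul, smul_eq_mul]
  calc (∑' n : ℕ, ((n.factorial : ℂ))⁻¹ • (∑ r, a r • P r) ^ n)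
      = ∑' n : ℕ, ∑ r, (((n.factorial : ℂ))⁻¹ • a r ^ n) • P r := tsum_congr h1
    _ = ∑ r, ∑' n : ℕ, (((n.factorial : ℂ))⁻¹ • a r ^ n) • P r := by
        refine Summable.tsum_finsetSum fun r _ => ?_
        exact (NormedSpace.expSeries_summable' (𝕂 := ℂ) (a r)).smul_const (P r)
    _ = ∑ r, Complex.exp (a r) • P r := by
        refine Finset.sum_congr rfl fun r _ => ?_
        rw [Summable.tsum_smul_const (NormedSpace.expSeries_summable' (𝕂 := ℂ) (a r)),
          Complex.exp_eq_exp_ℂ, NormedSpace.exp_eq_tsum (𝕂 := ℂ)]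

lemma psd_trace_nonneg {M : Matrix (Fin N) (Fin N) ℂ} (hM : M.PosSemidef) :
    0 ≤ M.trace := by
  rw [Matrix.trace]
  refine Finset.sum_nonneg fun i _ => ?_
  have := hM.dotProduct_mulVec_nonneg (Pi.single i 1)
  simpa [dotProduct, Matrix.mulVec, Pi.single_apply, Matrix.diag] using this

end Aux

/-- Spectral setup: the off-diagonal blocks of the normalized state are phase-times-
potential multiples of the corresponding blocks of the initial state. -/
theorem offdiagonal_block_of_normalized_state
    (N : ℕ) (hN : 1 ≤ N) (σ ℏ : ℝ) (hσ : 0 < σ) (hℏ : 0 < ℏ)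
    (Hhat : Matrix (Fin N) (Fin N) ℂ) (hHherm : Hhat.IsHermitian)
    (D : ℕ) (hD : 1 ≤ D) (E : Fin D → ℝ) (hE : Function.Injective E)
    (P : Fin D → Matrix (Fin N) (Fin N) ℂ)
    (hPherm : ∀ r, (P r).IsHermitian)
    (hPorth : ∀ r s, r ≠ s → P r * P s = 0)
    (hPidem : ∀ r, P r * P r = P r)
    (hPsum : ∑ r, P r = 1)
    (hHspec : Hhat = ∑ r, (E r : ℂ) • P r)
    (ρ0 : Matrix (Fin N) (Fin N) ℂ) (hρ0 : ρ0.PosSemidef) (hρ0tr : ρ0.trace = 1)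
    (K : ℝ → ℝ → Matrix (Fin N) (Fin N) ℂ)
    (hK : ∀ t x, K t x = NormedSpace.exp
      ((-Complex.I * ((ℏ⁻¹ * t : ℝ) : ℂ)) • Hhat
        + ((σ / 2 * x : ℝ) : ℂ) • Hhat - ((σ ^ 2 / 4 * t : ℝ) : ℂ) • Hhat ^ 2))
    (Λ : ℝ → ℝ → ℂ) (hΛ : ∀ t x, Λ t x = (K t x * ρ0 * (K t x)ᴴ).trace)
    (ρt : ℝ → ℝ → Matrix (Fin N) (Fin N) ℂ)
    (hρt : ∀ t x, ρt t x = (Λ t x)⁻¹ • (K t x * ρ0 * (K t x)ᴴ))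
    (p : Fin D → ℝ) (hp : ∀ r, p r = ((ρ0 * P r).trace).re)
    (Φ : Fin D → Fin D → ℝ → ℝ → ℝ)
    (hΦ : ∀ n m t x, Φ n m t x =
      Real.exp (σ / 2 * (E n + E m) * x - σ ^ 2 / 4 * ((E n) ^ 2 + (E m) ^ 2) * t) /
        ∑ r, p r * Real.exp (σ * E r * x - σ ^ 2 / 2 * (E r) ^ 2 * t)) :
    ∀ t ≥ (0 : ℝ), ∀ x : ℝ, ∀ n m : Fin D, n ≠ m →
      P n * ρt t x * P m
        = (Complex.exp (-Complex.I * ((ℏ⁻¹ * (E n - E m) * t : ℝ) : ℂ))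
            * ((Φ n m t x : ℝ) : ℂ)) • (P n * ρ0 * P m) := by
  intro t ht x n m hnm
  -- the scalar exponents
  obtain ⟨c, hc⟩ : ∃ c : Fin D → ℂ, ∀ r, c r =
      (-Complex.I * ((ℏ⁻¹ * t : ℝ) : ℂ) + ((σ / 2 * x : ℝ) : ℂ)) * (E r : ℂ)
        - ((σ ^ 2 / 4 * t : ℝ) : ℂ) * (E r : ℂ) ^ 2 := ⟨_, fun r => rfl⟩
  -- K as a spectral sum
  have hKeq : K t x = ∑ r, Complex.exp (c r) • P r := by
    rw [hK t x]
    have hH2 : Hhat ^ 2 = ∑ r, ((E r : ℂ) ^ 2) • P r := by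
      rw [hHspec, projSum_pow hPorth hPidem hPsum]
    have harg : (-Complex.I * ((ℏ⁻¹ * t : ℝ) : ℂ)) • Hhat
        + ((σ / 2 * x : ℝ) : ℂ) • Hhat - ((σ ^ 2 / 4 * t : ℝ) : ℂ) • Hhat ^ 2
        = ∑ r, c r • P r := by
      rw [hH2]
      conv_lhs => rw [hHspec]
      rw [Finset.smul_sum, Finset.smul_sum, Finset.smul_sum,
        ← Finset.sum_add_distrib, ← Finset.sum_sub_distrib]
      refine Finset.sum_congr rfl fun r _ => ?_
      rw [smul_smul, smul_smul, smul_smul, ← add_smul, ← sub_smul, hc r]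
      congr 1
      ring
    rw [harg, projSum_exp hPorth hPidem hPsum]
  have hKH : (K t x)ᴴ = ∑ r, (starRingEnd ℂ) (Complex.exp (c r)) • P r := by
    rw [hKeq, Matrix.conjTranspose_sum]
    refine Finset.sum_congr rfl fun r _ => ?_
    rw [Matrix.conjTranspose_smul, (hPherm r).eq]
    rfl
  have hPnK : P n * K t x = Complex.exp (c n) • P n := by
    rw [hKeq, Finset.mul_sum, Finset.sum_eq_single n]
    · rw [mul_smul_comm, hPidem n]
    · intro s _ hs; rw [mul_smul_comm, hPorth n s (Ne.symm hs)]; simp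
    · intro h; exact absurd (Finset.mem_univ n) h
  have hKHPm : (K t x)ᴴ * P m = (starRingEnd ℂ) (Complex.exp (c m)) • P m := by
    rw [hKH, Finset.sum_mul, Finset.sum_eq_single m]
    · rw [smul_mul_assoc, hPidem m]
    · intro s _ hs; rw [smul_mul_assoc, hPorth s m hs]; simp
    · intro h; exact absurd (Finset.mem_univ m) h
  -- traces of P r * ρ0
  have htrP : ∀ r, (P r * ρ0).trace = ((p r : ℝ) : ℂ) ∧ 0 ≤ p r := by
    intro r
    have h1 : (P r * ρ0 * P r).trace = (P r * ρ0).trace := by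
      rw [Matrix.trace_mul_comm, ← Matrix.mul_assoc, hPidem]
    have hpsd : (P r * ρ0 * (P r)ᴴ).PosSemidef := hρ0.mul_mul_conjTranspose_same (P r)
    rw [(hPherm r).eq] at hpsd
    have h2 := psd_trace_nonneg hpsd
    rw [Complex.le_def] at h2
    have hre : ((P r * ρ0).trace).re = p r := by
      rw [hp r, Matrix.trace_mul_comm]
    have him : ((P r * ρ0).trace).im = 0 := by
      rw [← h1, ← h2.2, Complex.zero_im]
    constructor
    · apply Complex.ext
      · rw [hre, Complex.ofReal_re]
      · rw [him, Complex.ofReal_im]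
    · rw [← hre, ← h1]
      simpa using h2.1
  have hpnn : ∀ r, 0 ≤ p r := fun r => (htrP r).2
  have hsum_p : ∑ r, p r = 1 := by
    have h : ((∑ r, p r : ℝ) : ℂ) = 1 := by
      push_cast
      calc ∑ r, ((p r : ℝ) : ℂ) = ∑ r, (P r * ρ0).trace :=
            Finset.sum_congr rfl fun r _ => ((htrP r).1).symm
        _ = ((∑ r, P r) * ρ0).trace := by rw [Finset.sum_mul, Matrix.trace_sum]
        _ = 1 := by rw [hPsum, one_mul, hρ0tr]
    exact_mod_cast h
  -- conjugate identities for the exponents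
  have hconj_c : ∀ r, (starRingEnd ℂ) (c r) + c r
      = ((σ * E r * x - σ ^ 2 / 2 * (E r) ^ 2 * t : ℝ) : ℂ) := by
    intro r
    rw [hc r]
    simp only [map_sub, _root_.map_mul, map_add, map_neg, map_pow, Complex.conj_ofReal,
      Complex.conj_I]
    push_cast
    ring
  -- the normalization is a positive real
  have hΛval : Λ t x
      = ((∑ r, p r * Real.exp (σ * E r * x - σ ^ 2 / 2 * (E r) ^ 2 * t) : ℝ) : ℂ) := by
    rw [hΛ t x, Matrix.trace_mul_comm, ← Matrix.mul_assoc]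
    have hKK : (K t x)ᴴ * K t x
        = ∑ r, ((starRingEnd ℂ) (Complex.exp (c r)) * Complex.exp (c r)) • P r := by
      rw [hKH, hKeq, projSum_mul hPorth hPidem]
    rw [hKK, Finset.sum_mul, Matrix.trace_sum]
    push_cast
    refine Finset.sum_congr rfl fun r _ => ?_
    rw [smul_mul_assoc, Matrix.trace_smul, smul_eq_mul, (htrP r).1,
      ← Complex.exp_conj, ← Complex.exp_add, hconj_c r, ← Complex.ofReal_exp]
    push_cast
    ring
  have hSpos : 0 < ∑ r, p r * Real.exp (σ * E r * x - σ ^ 2 / 2 * (E r) ^ 2 * t) := by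
    obtain ⟨r0, hr0⟩ : ∃ r0, 0 < p r0 := by
      by_contra h
      push_neg at h
      have : ∀ r ∈ Finset.univ, p r = 0 := fun r _ => le_antisymm (h r) (hpnn r)
      rw [Finset.sum_congr rfl this] at hsum_p
      simp at hsum_p
    refine Finset.sum_pos' (fun r _ => mul_nonneg (hpnn r) (Real.exp_pos _).le)
      ⟨r0, Finset.mem_univ r0, mul_pos hr0 (Real.exp_pos _)⟩
  set S : ℝ := ∑ r, p r * Real.exp (σ * E r * x - σ ^ 2 / 2 * (E r) ^ 2 * t) with hSdef
  -- the off-diagonal block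
  have hblock : P n * (K t x * ρ0 * (K t x)ᴴ) * P m
      = (Complex.exp (c n) * (starRingEnd ℂ) (Complex.exp (c m))) • (P n * ρ0 * P m) := by
    rw [show P n * (K t x * ρ0 * (K t x)ᴴ) * P m
        = (P n * K t x) * (ρ0 * ((K t x)ᴴ * P m)) by simp only [Matrix.mul_assoc],
      hPnK, hKHPm]
    simp only [smul_mul_assoc, mul_smul_comm, smul_smul, Matrix.mul_assoc]
    rw [mul_comm ((starRingEnd ℂ) (Complex.exp (c m))) (Complex.exp (c n))]
  -- combine the exponents
  have hc2 : c n + (starRingEnd ℂ) (c m)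
      = -Complex.I * ((ℏ⁻¹ * (E n - E m) * t : ℝ) : ℂ)
        + ((σ / 2 * (E n + E m) * x - σ ^ 2 / 4 * ((E n) ^ 2 + (E m) ^ 2) * t : ℝ) : ℂ) := by
    rw [hc n, hc m]
    simp only [map_sub, _root_.map_mul, map_add, map_neg, map_pow, Complex.conj_ofReal,
      Complex.conj_I]
    push_cast
    ring
  rw [hρt t x, hΛval, hΦ, mul_smul_comm, smul_mul_assoc, hblock, smul_smul]
  congr 1
  rw [← Complex.exp_conj, ← Complex.exp_add, hc2, Complex.exp_add,
    ← Complex.ofReal_exp, Complex.ofReal_div]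
  rw [show ((S : ℝ) : ℂ)⁻¹ * (Complex.exp (-Complex.I * ((ℏ⁻¹ * (E n - E m) * t : ℝ) : ℂ))
      * ((Real.exp (σ / 2 * (E n + E m) * x - σ ^ 2 / 4 * ((E n) ^ 2 + (E m) ^ 2) * t) : ℝ) : ℂ))
      = Complex.exp (-Complex.I * ((ℏ⁻¹ * (E n - E m) * t : ℝ) : ℂ))
        * (((Real.exp (σ / 2 * (E n + E m) * x - σ ^ 2 / 4 * ((E n) ^ 2 + (E m) ^ 2) * t) : ℝ) : ℂ)
          / ((S : ℝ) : ℂ)) by ring]
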